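/- If ρ₁ and ρ₂ are density operators on the state space of a quantum Mealy machine and ρ = ρ₁ − ρ₂ satisfies tr(E_{a|π}(ρ)) = 0 for all input sequences π drawn from a spanning set B with |π| ≤ d²−1 and all output sequences a, then p(a|π,ρ₁) = p(a|π,ρ₂) for every input sequence π (of any length, with arbitrary input states) and output sequence a. -/

import Mathlib

open Matrix Kronecker ComplexOrder

/-- Partial trace over the first (input) factor. -/
noncomputable def ptraceIn {α β : Type*} [Fintype α]
    (A : Matrix (α × β) (α × β) ℂ) : Matrix β β ℂ :=
  fun s t => ∑ i, A (i, s) (i, t)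

/-- One-step super-operator `E_{a|σ}` of a quantum Mealy machine `(H_in, H_s, U, M)`
with a general (density-operator) input `σ`:
`E_{a|σ}(ρ) = tr_{H_in}[(M_a ⊗ I) U (σ ⊗ ρ) U† (M_a† ⊗ I)]`. -/
noncomputable def stepD {α β O : Type*} [Fintype α] [Fintype β] [DecidableEq β]
    (U : Matrix (α × β) (α × β) ℂ) (M : O → Matrix α α ℂ)
    (σ : Matrix α α ℂ) (a : O) (ρ : Matrix β β ℂ) : Matrix β β ℂ :=
  ptraceIn ((M a ⊗ₖ (1 : Matrix β β ℂ)) * U * (σ ⊗ₖ ρ) * Uᴴ *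
    ((M a)ᴴ ⊗ₖ (1 : Matrix β β ℂ)))

/-- One-step super-operator `E_{a,φ}` with a pure input state `|φ⟩`. -/
noncomputable def stepP {α β O : Type*} [Fintype α] [Fintype β] [DecidableEq β]
    (U : Matrix (α × β) (α × β) ℂ) (M : O → Matrix α α ℂ)
    (φ : α → ℂ) (a : O) (ρ : Matrix β β ℂ) : Matrix β β ℂ :=
  stepD U M (vecMulVec φ (star φ)) a ρ

/-- `E_{a|π}` for an input sequence of density operators paired with outcomes. -/
noncomputable def runD {α β O : Type*} [Fintype α] [Fintype β] [DecidableEq β]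
    (U : Matrix (α × β) (α × β) ℂ) (M : O → Matrix α α ℂ)
    (l : List (Matrix α α ℂ × O)) (ρ : Matrix β β ℂ) : Matrix β β ℂ :=
  l.foldl (fun acc p => stepD U M p.1 p.2 acc) ρ

/-- `E_{a|π}` for an input sequence of pure states paired with outcomes. -/
noncomputable def runP {α β O : Type*} [Fintype α] [Fintype β] [DecidableEq β]
    (U : Matrix (α × β) (α × β) ℂ) (M : O → Matrix α α ℂ)
    (l : List ((α → ℂ) × O)) (ρ : Matrix β β ℂ) : Matrix β β ℂ :=
  l.foldl (fun acc p => stepP U M p.1 p.2 acc) ρ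

/-! Let `K n` be the space of operators `ρ` on `H_s` with `tr (E_{a|π} ρ) = 0` for all input
sequences `π` from `B` with `|π| ≤ n`. Then `K 0 = ker tr` and
`K (n + 1) = ker tr ∩ ⋂_{σ ∈ B, a} E_{a,σ}⁻¹ (K n)`, so the `K n` are the iterates of one
monotone map on subspaces, starting from the whole space. Such a decreasing chain is constant
from its first repetition on, and in a space of dimension `d²` it repeats after at most `d²`
strict steps; hence `K (d² - 1)` is invariant under every `E_{a,σ}` with `σ ∈ B`. By linearity
in `σ` it is then invariant under every `E_{a,σ}` with `σ ∈ span B`, and it lies in `ker tr`. -/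

theorem Submodule.iterate_finrank_succ_top_eq {K V : Type*} [DivisionRing K] [AddCommGroup V]
    [Module K V] [FiniteDimensional K V] {f : Submodule K V → Submodule K V}
    (hf : Monotone f) :
    f^[Module.finrank K V + 1] ⊤ = f^[Module.finrank K V] ⊤ := by
  set N := Module.finrank K V
  have anti : Antitone fun n => f^[n] ⊤ := hf.antitone_iterate_of_map_le le_top
  by_contra hne
  have strict : ∀ k ≤ N, f^[k + 1] ⊤ < f^[k] ⊤ := by
    refine fun k hk => (anti k.le_succ).lt_of_ne fun heq => hne ?_
    have hfix : ∀ n, f^[n + k] ⊤ = f^[k] ⊤ := fun n => by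
      rw [Function.iterate_add_apply]
      exact Function.iterate_fixed (by rwa [← Function.iterate_succ_apply' f k]) n
    have h1 := hfix (N + 1 - k)
    have h2 := hfix (N - k)
    rw [Nat.sub_add_cancel (by omega)] at h1 h2
    rw [h1, h2]
  have bound : ∀ k ≤ N + 1, Module.finrank K (f^[k] ⊤) + k ≤ N := by
    intro k hk
    induction k with
    | zero => exact (finrank_top K V).le
    | succ k ih =>
      have := finrank_lt_finrank_of_lt (strict k (by omega))
      have := ih (by omega)
      omega
  have := bound (N + 1) le_rfl
  omega

section PartialTrace

variable {α β : Type*} [Fintype α]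

theorem ptraceIn_add (A B : Matrix (α × β) (α × β) ℂ) :
    ptraceIn (A + B) = ptraceIn A + ptraceIn B := by
  ext s t
  simp [ptraceIn, Finset.sum_add_distrib]

theorem ptraceIn_smul (c : ℂ) (A : Matrix (α × β) (α × β) ℂ) :
    ptraceIn (c • A) = c • ptraceIn A := by
  ext s t
  simp [ptraceIn, Finset.mul_sum]

end PartialTrace

section MealyMachine

variable {α β O : Type*} [Fintype α] [Fintype β] [DecidableEq β]
  (U : Matrix (α × β) (α × β) ℂ) (M : O → Matrix α α ℂ)

noncomputable def stepBilin (a : O) :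
    Matrix α α ℂ →ₗ[ℂ] Matrix β β ℂ →ₗ[ℂ] Matrix β β ℂ :=
  LinearMap.mk₂ ℂ (fun σ ρ => stepD U M σ a ρ)
    (fun σ σ' ρ => by
      simp [stepD, add_kronecker, Matrix.mul_add, Matrix.add_mul, ptraceIn_add])
    (fun c σ ρ => by simp [stepD, smul_kronecker, ptraceIn_smul])
    (fun σ ρ ρ' => by
      simp [stepD, kronecker_add, Matrix.mul_add, Matrix.add_mul, ptraceIn_add])
    (fun c σ ρ => by simp [stepD, kronecker_smul, ptraceIn_smul])

theorem stepBilin_apply (a : O) (σ : Matrix α α ℂ) (ρ : Matrix β β ℂ) :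
    stepBilin U M a σ ρ = stepD U M σ a ρ :=
  rfl

theorem runD_cons (p : Matrix α α ℂ × O) (l : List (Matrix α α ℂ × O)) (ρ : Matrix β β ℂ) :
    runD U M (p :: l) ρ = runD U M l (stepD U M p.1 p.2 ρ) :=
  rfl

theorem runD_sub (l : List (Matrix α α ℂ × O)) (ρ ρ' : Matrix β β ℂ) :
    runD U M l (ρ - ρ') = runD U M l ρ - runD U M l ρ' := by
  induction l generalizing ρ ρ' with
  | nil => rfl
  | cons p l ih => simp only [runD_cons, ← stepBilin_apply, map_sub, ih]

noncomputable def traceNullStep (B : Set (Matrix α α ℂ)) (K : Submodule ℂ (Matrix β β ℂ)) :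
    Submodule ℂ (Matrix β β ℂ) :=
  LinearMap.ker (traceLinearMap β ℂ ℂ) ⊓ ⨅ σ ∈ B, ⨅ a, K.comap (stepBilin U M a σ)

variable {U M}

theorem traceNullStep_mono (B : Set (Matrix α α ℂ)) : Monotone (traceNullStep U M B) :=
  fun _ _ hK =>
    inf_le_inf_left _ <| iInf₂_mono fun _ _ => iInf_mono fun _ => Submodule.comap_mono hK

theorem mem_traceNullStep_iterate {B : Set (Matrix α α ℂ)} (n : ℕ) {ρ : Matrix β β ℂ}
    (h : ∀ l : List (Matrix α α ℂ × O), (∀ p ∈ l, p.1 ∈ B) → l.length ≤ n →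
      (runD U M l ρ).trace = 0) :
    ρ ∈ (traceNullStep U M B)^[n + 1] ⊤ := by
  induction n generalizing ρ with
  | zero =>
    have : ρ.trace = 0 := h [] (by simp) le_rfl
    simpa [traceNullStep] using this
  | succ n ih =>
    rw [Function.iterate_succ_apply']
    simp only [traceNullStep, Submodule.mem_inf, LinearMap.mem_ker, Submodule.mem_iInf,
      Submodule.mem_comap, stepBilin_apply]
    refine ⟨h [] (by simp) (Nat.zero_le _), fun σ hσ a => ih fun l hl hlen => ?_⟩
    rw [← runD_cons U M (σ, a)]
    exact h _ (by simpa [hσ] using hl) (by simpa using hlen)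

variable {B : Set (Matrix α α ℂ)} {K : Submodule ℂ (Matrix β β ℂ)}

theorem stepD_mem_of_le_traceNullStep (hK : K ≤ traceNullStep U M B K) {σ : Matrix α α ℂ}
    (hσ : σ ∈ Submodule.span ℂ B) (a : O) {ρ : Matrix β β ℂ} (hρ : ρ ∈ K) :
    stepD U M σ a ρ ∈ K := by
  induction hσ using Submodule.span_induction generalizing ρ with
  | mem σ hσ =>
    have := hK hρ
    simp only [traceNullStep, Submodule.mem_inf, Submodule.mem_iInf, Submodule.mem_comap] at this
    exact this.2 σ hσ a
  | zero => simp [← stepBilin_apply]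
  | add σ τ _ _ hσ hτ =>
    simpa [← stepBilin_apply] using K.add_mem (hσ hρ) (hτ hρ)
  | smul c σ _ hσ =>
    simpa [← stepBilin_apply] using K.smul_mem c (hσ hρ)

theorem trace_runD_eq_zero_of_le_traceNullStep (hK : K ≤ traceNullStep U M B K)
    {l : List (Matrix α α ℂ × O)} (hl : ∀ p ∈ l, p.1 ∈ Submodule.span ℂ B)
    {ρ : Matrix β β ℂ} (hρ : ρ ∈ K) :
    (runD U M l ρ).trace = 0 := by
  induction l generalizing ρ with
  | nil => exact (Submodule.mem_inf.mp (hK hρ)).1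
  | cons p l ih =>
    exact ih (fun q hq => hl q (List.mem_cons_of_mem p hq))
      (stepD_mem_of_le_traceNullStep hK (hl p List.mem_cons_self) p.2 hρ)

end MealyMachine

theorem zero_on_short_basis_seqs_implies_equiv_general (di ds : ℕ) (O : Type)
    (U : Matrix (Fin di × Fin ds) (Fin di × Fin ds) ℂ)
    (M : O → Matrix (Fin di) (Fin di) ℂ)
    (B : Set (Matrix (Fin di) (Fin di) ℂ))
    (hBspan : ∀ σ : Matrix (Fin di) (Fin di) ℂ, σ.PosSemidef → σ.trace = 1 →
      σ ∈ Submodule.span ℂ B)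
    (ρ₁ ρ₂ : Matrix (Fin ds) (Fin ds) ℂ)
    (h : ∀ l : List (Matrix (Fin di) (Fin di) ℂ × O),
      (∀ p ∈ l, p.1 ∈ B) → l.length ≤ ds ^ 2 - 1 →
      (runD U M l (ρ₁ - ρ₂)).trace = 0) :
    ∀ l : List (Matrix (Fin di) (Fin di) ℂ × O),
      (∀ p ∈ l, p.1.PosSemidef ∧ p.1.trace = 1) →
      (runD U M l ρ₁).trace = (runD U M l ρ₂).trace := by
  intro l hl
  have hdim : Module.finrank ℂ (Matrix (Fin ds) (Fin ds) ℂ) = ds ^ 2 := by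
    simp [Module.finrank_matrix, sq]
  set K := (traceNullStep U M B)^[ds ^ 2] ⊤
  have hK : K ≤ traceNullStep U M B K := by
    have := Submodule.iterate_finrank_succ_top_eq (traceNullStep_mono (U := U) (M := M) B)
    rw [hdim, Function.iterate_succ_apply'] at this
    exact this.ge
  have hρ : ρ₁ - ρ₂ ∈ K :=
    (traceNullStep_mono B).antitone_iterate_of_map_le le_top (by omega)
      (mem_traceNullStep_iterate _ h)
  rw [← sub_eq_zero, ← trace_sub, ← runD_sub]
  exact trace_runD_eq_zero_of_le_traceNullStep hK
    (fun p hp => hBspan _ (hl p hp).1 (hl p hp).2) hρ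

/-- If `ρ = ρ₁ − ρ₂` has `tr(E_{a|π}(ρ)) = 0` for all input sequences `π` drawn from a
spanning set `B` of density operators with `|π| ≤ d² − 1` and all output sequences `a`,
then `ρ₁` and `ρ₂` give the same output probabilities for every input sequence. -/
theorem zero_on_short_basis_seqs_implies_equiv (di ds : ℕ) (O : Type) [Fintype O]
    (U : Matrix (Fin di × Fin ds) (Fin di × Fin ds) ℂ)
    (hU : U ∈ Matrix.unitaryGroup (Fin di × Fin ds) ℂ)
    (M : O → Matrix (Fin di) (Fin di) ℂ) (hM : ∑ a, (M a)ᴴ * M a = 1)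
    (B : Set (Matrix (Fin di) (Fin di) ℂ))
    (hB : ∀ σ ∈ B, σ.PosSemidef ∧ σ.trace = 1)
    (hBspan : ∀ σ : Matrix (Fin di) (Fin di) ℂ, σ.PosSemidef → σ.trace = 1 →
      σ ∈ Submodule.span ℂ B)
    (ρ₁ ρ₂ : Matrix (Fin ds) (Fin ds) ℂ)
    (hρ₁ : ρ₁.PosSemidef) (ht₁ : ρ₁.trace = 1)
    (hρ₂ : ρ₂.PosSemidef) (ht₂ : ρ₂.trace = 1)
    (h : ∀ l : List (Matrix (Fin di) (Fin di) ℂ × O),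
      (∀ p ∈ l, p.1 ∈ B) → l.length ≤ ds ^ 2 - 1 →
      (runD U M l (ρ₁ - ρ₂)).trace = 0) :
    ∀ l : List (Matrix (Fin di) (Fin di) ℂ × O),
      (∀ p ∈ l, p.1.PosSemidef ∧ p.1.trace = 1) →
      (runD U M l ρ₁).trace = (runD U M l ρ₂).trace :=
  zero_on_short_basis_seqs_implies_equiv_general di ds O U M B hBspan ρ₁ ρ₂ h
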